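/- Consider Algorithm 1 option (i) under Assumptions 1 and 2 with each f_i L-smooth and local learning rate 1/(16KL) ≤ η_l ≤ 1/(8KL). Define the normalized global update d̃^t = (1/(η_l K)) d^t = (1/(NK)) ∑_{i=1}^N ∑_{k=1}^{K} g_i^{t,k−1}. Then the divergence between the normalized global update and the true global gradient is bounded as E[‖∇f(x^t) − d̃^t‖²] ≤ (15/16) E[‖∇f(x^t)‖²] + 60 L² (9σ_l² + K σ_g²) K η_l². -/

import Mathlib

open MeasureTheory ProbabilityTheory

/-- The global empirical risk `f = (1/N) ∑ᵢ fᵢ`. -/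
noncomputable def globalObjective {E : Type*} (N : ℕ) (f : Fin N → E → ℝ) : E → ℝ :=
  fun x => (N : ℝ)⁻¹ * ∑ i, f i x

/-!
Write `∇f(x⁰) - d̃` as `-(NK)⁻¹ ∑ᵢ ∑ₖ (gᵢᵏ - ∇fᵢ(x⁰))` and split each client's sum into the noise
`∑ₖ (gᵢᵏ - ∇fᵢ(xᵢᵏ))` and the drift `∑ₖ (∇fᵢ(xᵢᵏ) - ∇fᵢ(x⁰))`. The noise terms are martingale
differences for the filtration of the run, hence orthogonal in `L²`, so the noise has second moment
at most `Kσ_l²`. By smoothness the drift is controlled by `S = ∑ₖ E‖xᵢᵏ - x⁰‖²`, and `S` satisfies a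
recursive inequality that closes because `KLη_l ≤ 1/8`. Heterogeneity gives
`E‖∇fᵢ(x⁰)‖² ≤ 2σ_g² + 2E‖∇f(x⁰)‖²`, and the lower bound `η_l ≥ 1/(16KL)` turns the noise
contribution `2σ_l²/K` into a multiple of `L²Kη_l²σ_l²`.
-/

open Finset
open scoped RealInnerProductSpace

theorem norm_sum_sq_le_card_mul {E ι : Type*} [SeminormedAddCommGroup E] (s : Finset ι)
    (v : ι → E) : ‖∑ i ∈ s, v i‖ ^ 2 ≤ #s * ∑ i ∈ s, ‖v i‖ ^ 2 :=
  (pow_le_pow_left₀ (norm_nonneg _) (norm_sum_le s v) 2).trans sq_sum_le_card_mul_sum_sq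

theorem norm_add_sq_le_two_mul {E : Type*} [SeminormedAddCommGroup E] (a b : E) :
    ‖a + b‖ ^ 2 ≤ 2 * ‖a‖ ^ 2 + 2 * ‖b‖ ^ 2 :=
  (pow_le_pow_left₀ (norm_nonneg _) (norm_add_le a b) 2).trans <| by
    linarith [add_sq_le (a := ‖a‖) (b := ‖b‖)]

theorem LipschitzWith.memLp_comp {Ω E F : Type*} {m : MeasurableSpace Ω} {μ : Measure Ω}
    [IsFiniteMeasure μ] [NormedAddCommGroup E] [NormedAddCommGroup F] {p : ENNReal} {K : NNReal}
    {g : E → F} (hg : LipschitzWith K g) {X : Ω → E} (hX : MemLp X p μ) :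
    MemLp (fun ω => g (X ω)) p μ := by
  have h0 : LipschitzWith K (fun v => g v - g 0) := fun a b => by
    simpa only [edist_sub_right] using hg a b
  convert (h0.comp_memLp (sub_self _) hX).add (memLp_const (g 0)) using 1
  ext ω
  simp

theorem sq_mul_mul_mem_Icc {K L η : ℝ} (hK : 0 < K) (hL : 0 < L)
    (h_lb : 1 / (16 * K * L) ≤ η) (h_ub : η ≤ 1 / (8 * K * L)) :
    (K * L * η) ^ 2 ∈ Set.Icc (1 / 256) (1 / 64) := by
  have h₁ := (div_le_iff₀ (by positivity)).1 h_lb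
  have h₂ := (le_div_iff₀ (by positivity)).1 h_ub
  constructor <;> nlinarith

section SecondMoment

variable {Ω E : Type*} [NormedAddCommGroup E] {m : MeasurableSpace Ω} {μ : Measure Ω}

theorem integral_norm_sum_sq_le {ι : Type*} (s : Finset ι) {X : ι → Ω → E}
    (hX : ∀ i ∈ s, MemLp (X i) 2 μ) :
    ∫ ω, ‖∑ i ∈ s, X i ω‖ ^ 2 ∂μ ≤ #s * ∑ i ∈ s, ∫ ω, ‖X i ω‖ ^ 2 ∂μ := by
  have hint : ∀ i ∈ s, Integrable (fun ω => ‖X i ω‖ ^ 2) μ :=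
    fun i hi => (hX i hi).integrable_norm_pow two_ne_zero
  rw [← integral_finsetSum s hint, ← integral_const_mul]
  exact integral_mono_of_nonneg (.of_forall fun _ => by positivity)
    ((integrable_finsetSum s hint).const_mul _)
    (.of_forall fun ω => norm_sum_sq_le_card_mul s fun i => X i ω)

theorem integral_norm_add_sq_le {X Y : Ω → E} (hX : MemLp X 2 μ) (hY : MemLp Y 2 μ) :
    ∫ ω, ‖X ω + Y ω‖ ^ 2 ∂μ ≤ 2 * ∫ ω, ‖X ω‖ ^ 2 ∂μ + 2 * ∫ ω, ‖Y ω‖ ^ 2 ∂μ := by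
  have hXi := (hX.integrable_norm_pow two_ne_zero).const_mul 2
  have hYi := (hY.integrable_norm_pow two_ne_zero).const_mul 2
  rw [← integral_const_mul, ← integral_const_mul, ← integral_add hXi hYi]
  exact integral_mono_of_nonneg (.of_forall fun _ => by positivity) (hXi.add hYi)
    (.of_forall fun ω => norm_add_sq_le_two_mul (X ω) (Y ω))

theorem integral_norm_sq_le_of_norm_sub_sq_le [IsProbabilityMeasure μ] {X Y : Ω → E} {c : ℝ}
    (hXY : ∀ ω, ‖X ω - Y ω‖ ^ 2 ≤ c) (hY : MemLp Y 2 μ) :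
    ∫ ω, ‖X ω‖ ^ 2 ∂μ ≤ 2 * c + 2 * ∫ ω, ‖Y ω‖ ^ 2 ∂μ := by
  have hYi := (hY.integrable_norm_pow two_ne_zero).const_mul 2
  calc ∫ ω, ‖X ω‖ ^ 2 ∂μ ≤ ∫ ω, (2 * c + 2 * ‖Y ω‖ ^ 2) ∂μ := by
        refine integral_mono_of_nonneg (.of_forall fun _ => by positivity)
          ((integrable_const _).add hYi) (.of_forall fun ω => ?_)
        have := norm_add_sq_le_two_mul (X ω - Y ω) (Y ω)
        rw [sub_add_cancel] at this
        linarith [hXY ω]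
    _ = 2 * c + 2 * ∫ ω, ‖Y ω‖ ^ 2 ∂μ := by
        rw [integral_add (integrable_const _) hYi, integral_const, integral_const_mul]
        simp

theorem integral_norm_comp_sub_comp_sq_le {F : Type*} [NormedAddCommGroup F] {Φ : E → F} {L : ℝ}
    (hΦ : ∀ u v, ‖Φ u - Φ v‖ ≤ L * ‖u - v‖) {X Y : Ω → E} (hXY : MemLp (X - Y) 2 μ) :
    ∫ ω, ‖Φ (X ω) - Φ (Y ω)‖ ^ 2 ∂μ ≤ L ^ 2 * ∫ ω, ‖X ω - Y ω‖ ^ 2 ∂μ := by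
  rw [← integral_const_mul]
  refine integral_mono_of_nonneg (.of_forall fun _ => by positivity)
    ((hXY.integrable_norm_pow two_ne_zero).const_mul _) (.of_forall fun ω => ?_)
  simp only [← mul_pow]
  exact pow_le_pow_left₀ (norm_nonneg _) (hΦ _ _) 2

variable [InnerProductSpace ℝ E]

theorem MeasureTheory.MemLp.integrable_inner {X Y : Ω → E} (hX : MemLp X 2 μ) (hY : MemLp Y 2 μ) :
    Integrable (fun ω => ⟪X ω, Y ω⟫) μ :=
  memLp_one_iff_integrable.1 ((innerSL ℝ).memLp_of_bilin 1 hX hY)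

variable [CompleteSpace E] [IsFiniteMeasure μ]

theorem integral_inner_eq_zero_of_condExp_eq_zero {𝓖 : MeasurableSpace Ω} (h𝓖 : 𝓖 ≤ m)
    {Y Z : Ω → E} (hZm : StronglyMeasurable[𝓖] Z) (hZ : MemLp Z 2 μ) (hY : MemLp Y 2 μ)
    (hY0 : μ[Y|𝓖] =ᵐ[μ] 0) :
    ∫ ω, ⟪Z ω, Y ω⟫ ∂μ = 0 := by
  have hpull : μ[fun ω => ⟪Z ω, Y ω⟫|𝓖] =ᵐ[μ] fun ω => ⟪Z ω, μ[Y|𝓖] ω⟫ :=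
    condExp_bilin_of_stronglyMeasurable_left (innerSL ℝ) hZm
    (hZ.integrable_inner hY) (hY.integrable one_le_two)
  rw [← integral_condExp h𝓖, integral_congr_ae hpull]
  refine integral_eq_zero_of_ae ?_
  filter_upwards [hY0] with ω hω
  simp [hω]

theorem integral_norm_sum_range_sq_of_condExp_eq_zero (𝓕 : Filtration ℕ m) {Y : ℕ → Ω → E}
    (hYm : ∀ k, StronglyMeasurable[𝓕 (k + 1)] (Y k)) (hY : ∀ k, MemLp (Y k) 2 μ)
    (hY0 : ∀ k, μ[Y k|𝓕 k] =ᵐ[μ] 0) (n : ℕ) :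
    ∫ ω, ‖∑ k ∈ range n, Y k ω‖ ^ 2 ∂μ = ∑ k ∈ range n, ∫ ω, ‖Y k ω‖ ^ 2 ∂μ := by
  induction n with
  | zero => simp
  | succ n ih =>
    have hS : MemLp (fun ω => ∑ k ∈ range n, Y k ω) 2 μ := memLp_finsetSum _ fun k _ => hY k
    have hSm : StronglyMeasurable[𝓕 n] (fun ω => ∑ k ∈ range n, Y k ω) :=
      Finset.stronglyMeasurable_fun_sum _ fun k hk =>
        (hYm k).mono (𝓕.mono (Nat.succ_le_of_lt (mem_range.1 hk)))
    have hcross := integral_inner_eq_zero_of_condExp_eq_zero (𝓕.le n) hSm hS (hY n) (hY0 n)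
    have hSi := hS.integrable_norm_pow two_ne_zero
    have hYi := (hY n).integrable_norm_pow two_ne_zero
    have hci := (hS.integrable_inner (hY n)).const_mul 2
    simp_rw [sum_range_succ, norm_add_sq_real]
    rw [integral_add (hSi.fun_add hci) hYi, integral_add hSi hci, integral_const_mul, hcross, ih]
    simp

end SecondMoment

section LocalSGD

variable {Ω E : Type*} [NormedAddCommGroup E] [InnerProductSpace ℝ E] [CompleteSpace E]
  {m : MeasurableSpace Ω}

/-- A client's local SGD run of Algorithm 1 from `x 0`: iterates adapted to the filtration `𝓕`
of the run and stochastic gradients `g k` satisfying Assumption 1 relative to it. -/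
structure IsLocalSGD (μ : Measure Ω) (𝓕 : Filtration ℕ m) (φ : E → ℝ) (η σ : ℝ)
    (x g : ℕ → Ω → E) : Prop where
  stronglyAdapted : StronglyAdapted 𝓕 x
  memLp_iterate : ∀ k, MemLp (x k) 2 μ
  memLp_grad : ∀ k, MemLp (g k) 2 μ
  step : ∀ k ω, x (k + 1) ω = x k ω - η • g k ω
  condExp_grad : ∀ k, μ[g k|𝓕 k] =ᵐ[μ] fun ω => gradient φ (x k ω)
  variance_le : ∀ k, ∫ ω, ‖g k ω - gradient φ (x k ω)‖ ^ 2 ∂μ ≤ σ ^ 2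

namespace IsLocalSGD

variable {μ : Measure Ω} {𝓕 : Filtration ℕ m} {φ : E → ℝ} {η σ L : ℝ}
  {x g : ℕ → Ω → E}

theorem sub_init_eq (h : IsLocalSGD μ 𝓕 φ η σ x g) (n : ℕ) (ω : Ω) :
    x n ω - x 0 ω = -(η • ∑ k ∈ range n, g k ω) := by
  induction n with
  | zero => simp
  | succ n ih => rw [h.step, sum_range_succ, smul_add, neg_add, ← ih]; abel

theorem stronglyMeasurable_grad (h : IsLocalSGD μ 𝓕 φ η σ x g) (hη : η ≠ 0) (k : ℕ) :
    StronglyMeasurable[𝓕 (k + 1)] (g k) := by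
  have hg : g k = fun ω => η⁻¹ • (x k ω - x (k + 1) ω) := by
    ext1 ω
    rw [h.step, sub_sub_cancel, inv_smul_smul₀ hη]
  rw [hg]
  exact (((h.stronglyAdapted k).mono (𝓕.mono k.le_succ)).sub
    (h.stronglyAdapted (k + 1))).const_smul _

theorem stronglyMeasurable_gradient (h : IsLocalSGD μ 𝓕 φ η σ x g)
    (hφ : ∀ u v, ‖gradient φ u - gradient φ v‖ ≤ L * ‖u - v‖) (k : ℕ) :
    StronglyMeasurable[𝓕 k] (fun ω => gradient φ (x k ω)) :=
  (LipschitzWith.of_dist_le' (by simpa only [dist_eq_norm] using hφ)).continuous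
    |>.comp_stronglyMeasurable (h.stronglyAdapted k)

theorem memLp_gradient [IsFiniteMeasure μ] (h : IsLocalSGD μ 𝓕 φ η σ x g)
    (hφ : ∀ u v, ‖gradient φ u - gradient φ v‖ ≤ L * ‖u - v‖) (k : ℕ) :
    MemLp (fun ω => gradient φ (x k ω)) 2 μ :=
  (LipschitzWith.of_dist_le' (by simpa only [dist_eq_norm] using hφ)).memLp_comp
    (h.memLp_iterate k)

theorem condExp_noise_eq_zero [IsFiniteMeasure μ] (h : IsLocalSGD μ 𝓕 φ η σ x g)
    (hφ : ∀ u v, ‖gradient φ u - gradient φ v‖ ≤ L * ‖u - v‖) (k : ℕ) :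
    μ[fun ω => g k ω - gradient φ (x k ω)|𝓕 k] =ᵐ[μ] 0 := by
  have hgrad := h.memLp_gradient hφ k
  filter_upwards [condExp_sub ((h.memLp_grad k).integrable one_le_two)
    (hgrad.integrable one_le_two) (𝓕 k), h.condExp_grad k] with ω hsub hg
  rw [show (fun ω => g k ω - gradient φ (x k ω)) = g k - fun ω => gradient φ (x k ω) from rfl,
    hsub, Pi.sub_apply, hg, condExp_of_stronglyMeasurable (𝓕.le k)
      (h.stronglyMeasurable_gradient hφ k) (hgrad.integrable one_le_two)]
  simp

theorem integral_norm_sum_noise_sq_le [IsFiniteMeasure μ] (h : IsLocalSGD μ 𝓕 φ η σ x g)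
    (hη : η ≠ 0) (hφ : ∀ u v, ‖gradient φ u - gradient φ v‖ ≤ L * ‖u - v‖) (n : ℕ) :
    ∫ ω, ‖∑ k ∈ range n, (g k ω - gradient φ (x k ω))‖ ^ 2 ∂μ ≤ n * σ ^ 2 := by
  rw [integral_norm_sum_range_sq_of_condExp_eq_zero 𝓕
    (Y := fun k ω => g k ω - gradient φ (x k ω)) (fun k => (h.stronglyMeasurable_grad hη k).sub
      ((h.stronglyMeasurable_gradient hφ k).mono (𝓕.mono k.le_succ)))
    (fun k => (h.memLp_grad k).sub (h.memLp_gradient hφ k)) (h.condExp_noise_eq_zero hφ)]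
  simpa using sum_le_sum fun k (_ : k ∈ range n) => h.variance_le k

theorem integral_norm_sub_init_sq_le [IsFiniteMeasure μ] (h : IsLocalSGD μ 𝓕 φ η σ x g)
    (hη : η ≠ 0) (hφ : ∀ u v, ‖gradient φ u - gradient φ v‖ ≤ L * ‖u - v‖) (n : ℕ) :
    ∫ ω, ‖x n ω - x 0 ω‖ ^ 2 ∂μ
      ≤ 2 * η ^ 2 * n * (σ ^ 2 + ∑ k ∈ range n, ∫ ω, ‖gradient φ (x k ω)‖ ^ 2 ∂μ) := by
  have hsplit : ∀ ω, ‖x n ω - x 0 ω‖ ^ 2 = η ^ 2 * ‖∑ k ∈ range n, (g k ω - gradient φ (x k ω))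
      + ∑ k ∈ range n, gradient φ (x k ω)‖ ^ 2 := fun ω => by
    rw [h.sub_init_eq, ← sum_add_distrib, norm_neg, norm_smul, mul_pow, Real.norm_eq_abs, sq_abs]
    simp only [sub_add_cancel]
  have hnoise := h.integral_norm_sum_noise_sq_le hη hφ n
  have hgrad := integral_norm_sum_sq_le (μ := μ) (range n) fun k _ => h.memLp_gradient hφ k
  rw [card_range] at hgrad
  calc ∫ ω, ‖x n ω - x 0 ω‖ ^ 2 ∂μ
      = η ^ 2 * ∫ ω, ‖∑ k ∈ range n, (g k ω - gradient φ (x k ω))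
          + ∑ k ∈ range n, gradient φ (x k ω)‖ ^ 2 ∂μ := by
        simp_rw [hsplit]; exact integral_const_mul _ _
    _ ≤ η ^ 2 * (2 * (n * σ ^ 2)
          + 2 * (n * ∑ k ∈ range n, ∫ ω, ‖gradient φ (x k ω)‖ ^ 2 ∂μ)) := by
        gcongr
        refine (integral_norm_add_sq_le ?_ ?_).trans (by gcongr)
        · exact memLp_finsetSum _ fun k _ => (h.memLp_grad k).sub (h.memLp_gradient hφ k)
        · exact memLp_finsetSum _ fun k _ => h.memLp_gradient hφ k
    _ = _ := by ring

theorem integral_norm_gradient_sub_init_sq_le (h : IsLocalSGD μ 𝓕 φ η σ x g)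
    (hφ : ∀ u v, ‖gradient φ u - gradient φ v‖ ≤ L * ‖u - v‖) (k : ℕ) :
    ∫ ω, ‖gradient φ (x k ω) - gradient φ (x 0 ω)‖ ^ 2 ∂μ
      ≤ L ^ 2 * ∫ ω, ‖x k ω - x 0 ω‖ ^ 2 ∂μ :=
  integral_norm_comp_sub_comp_sq_le hφ ((h.memLp_iterate k).sub (h.memLp_iterate 0))

theorem integral_norm_gradient_sq_le [IsFiniteMeasure μ] (h : IsLocalSGD μ 𝓕 φ η σ x g)
    (hφ : ∀ u v, ‖gradient φ u - gradient φ v‖ ≤ L * ‖u - v‖) (k : ℕ) :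
    ∫ ω, ‖gradient φ (x k ω)‖ ^ 2 ∂μ
      ≤ 2 * L ^ 2 * ∫ ω, ‖x k ω - x 0 ω‖ ^ 2 ∂μ + 2 * ∫ ω, ‖gradient φ (x 0 ω)‖ ^ 2 ∂μ := by
  have := integral_norm_add_sq_le ((h.memLp_gradient hφ k).sub (h.memLp_gradient hφ 0))
    (h.memLp_gradient hφ 0)
  simp only [Pi.sub_apply, sub_add_cancel] at this
  linarith [h.integral_norm_gradient_sub_init_sq_le hφ k]

theorem sum_integral_norm_sub_init_sq_le [IsFiniteMeasure μ] (h : IsLocalSGD μ 𝓕 φ η σ x g)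
    (hη : η ≠ 0) (hφ : ∀ u v, ‖gradient φ u - gradient φ v‖ ≤ L * ‖u - v‖) {K : ℕ}
    (hKLη : (K * L * η) ^ 2 ≤ 1 / 64) :
    ∑ k ∈ range K, ∫ ω, ‖x k ω - x 0 ω‖ ^ 2 ∂μ
      ≤ 32 / 15 * K ^ 2 * η ^ 2 * (σ ^ 2 + 2 * K * ∫ ω, ‖gradient φ (x 0 ω)‖ ^ 2 ∂μ) := by
  set S := ∑ k ∈ range K, ∫ ω, ‖x k ω - x 0 ω‖ ^ 2 ∂μ
  set T := ∑ k ∈ range K, ∫ ω, ‖gradient φ (x k ω)‖ ^ 2 ∂μ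
  set Φ := ∫ ω, ‖gradient φ (x 0 ω)‖ ^ 2 ∂μ
  have hS : 0 ≤ S := sum_nonneg fun k _ => integral_nonneg fun ω => by positivity
  have hT : T ≤ 2 * L ^ 2 * S + 2 * K * Φ := by
    have := sum_le_sum fun k (_ : k ∈ range K) => h.integral_norm_gradient_sq_le hφ k
    rw [sum_add_distrib, ← mul_sum, sum_const, card_range, nsmul_eq_mul] at this
    linarith
  have hstep : ∀ k ∈ range K, ∫ ω, ‖x k ω - x 0 ω‖ ^ 2 ∂μ ≤ 2 * η ^ 2 * K * (σ ^ 2 + T) := by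
    intro k hk
    have hkK : k ≤ K := (mem_range.1 hk).le
    refine (h.integral_norm_sub_init_sq_le hη hφ k).trans ?_
    gcongr
    exact sum_le_sum_of_subset_of_nonneg (range_subset_range.2 hkK)
        fun j _ _ => integral_nonneg fun ω => by positivity
  have hsum : S ≤ K * (2 * η ^ 2 * K * (σ ^ 2 + T)) := by
    simpa using sum_le_sum hstep
  have hcontract : (K * L * η) ^ 2 * S ≤ 1 / 64 * S := mul_le_mul_of_nonneg_right hKLη hS
  -- `S ≤ 2K²η²σ² + 4(KLη)²S + 4K³η²Φ ≤ 2K²η²σ² + S/16 + 4K³η²Φ`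
  nlinarith [mul_le_mul_of_nonneg_left hT (by positivity : (0 : ℝ) ≤ 2 * η ^ 2 * K ^ 2)]

theorem integral_norm_sum_sub_gradient_init_sq_le [IsFiniteMeasure μ]
    (h : IsLocalSGD μ 𝓕 φ η σ x g) (hη : η ≠ 0)
    (hφ : ∀ u v, ‖gradient φ u - gradient φ v‖ ≤ L * ‖u - v‖) {K : ℕ}
    (hKLη : (K * L * η) ^ 2 ≤ 1 / 64) :
    ∫ ω, ‖∑ k ∈ range K, (g k ω - gradient φ (x 0 ω))‖ ^ 2 ∂μ
      ≤ 2 * K * σ ^ 2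
        + 5 * L ^ 2 * K ^ 3 * η ^ 2 * (σ ^ 2 + 2 * K * ∫ ω, ‖gradient φ (x 0 ω)‖ ^ 2 ∂μ) := by
  have hsplit : ∀ ω, ∑ k ∈ range K, (g k ω - gradient φ (x 0 ω))
      = ∑ k ∈ range K, (g k ω - gradient φ (x k ω))
        + ∑ k ∈ range K, (gradient φ (x k ω) - gradient φ (x 0 ω)) := fun ω => by
    rw [← sum_add_distrib]
    simp only [sub_add_sub_cancel]
  have hnoise_mem : MemLp (fun ω => ∑ k ∈ range K, (g k ω - gradient φ (x k ω))) 2 μ :=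
    memLp_finsetSum _ fun k _ => (h.memLp_grad k).sub (h.memLp_gradient hφ k)
  have hdrift_mem : ∀ k, MemLp (fun ω => gradient φ (x k ω) - gradient φ (x 0 ω)) 2 μ :=
    fun k => (h.memLp_gradient hφ k).sub (h.memLp_gradient hφ 0)
  have hdrift := integral_norm_sum_sq_le (μ := μ) (range K) fun k _ => hdrift_mem k
  rw [card_range] at hdrift
  have hlip : ∑ k ∈ range K, ∫ ω, ‖gradient φ (x k ω) - gradient φ (x 0 ω)‖ ^ 2 ∂μ
      ≤ L ^ 2 * ∑ k ∈ range K, ∫ ω, ‖x k ω - x 0 ω‖ ^ 2 ∂μ := by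
    rw [mul_sum]
    exact sum_le_sum fun k _ => h.integral_norm_gradient_sub_init_sq_le hφ k
  have hS := h.sum_integral_norm_sub_init_sq_le hη hφ hKLη
  have hnoise := h.integral_norm_sum_noise_sq_le hη hφ K
  simp_rw [hsplit]
  refine (integral_norm_add_sq_le hnoise_mem (memLp_finsetSum _ fun k _ => hdrift_mem k)).trans ?_
  set A := σ ^ 2 + 2 * K * ∫ ω, ‖gradient φ (x 0 ω)‖ ^ 2 ∂μ
  have hA : 0 ≤ L ^ 2 * K ^ 3 * η ^ 2 * A := by
    have : 0 ≤ A := by positivity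
    positivity
  have hD : ∫ ω, ‖∑ k ∈ range K, (gradient φ (x k ω) - gradient φ (x 0 ω))‖ ^ 2 ∂μ
      ≤ K * (L ^ 2 * (32 / 15 * K ^ 2 * η ^ 2 * A)) := by
    refine hdrift.trans ?_
    gcongr
    exact hlip.trans (by gcongr)
  linarith

end IsLocalSGD
end LocalSGD

section FederatedAveraging

variable {Ω E : Type*} [NormedAddCommGroup E] [InnerProductSpace ℝ E] [CompleteSpace E]
  {m : MeasurableSpace Ω} {μ : Measure Ω}

theorem gradient_globalObjective {N : ℕ} {f : Fin N → E → ℝ} {x : E}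
    (hf : ∀ i, DifferentiableAt ℝ (f i) x) :
    gradient (globalObjective N f) x = (N : ℝ)⁻¹ • ∑ i, gradient (f i) x := by
  have h : HasFDerivAt (globalObjective N f) ((N : ℝ)⁻¹ • ∑ i, fderiv ℝ (f i) x) x :=
    (HasFDerivAt.fun_sum (u := univ) fun i _ => (hf i).hasFDerivAt).const_mul _
  refine HasGradientAt.gradient ?_
  rw [hasGradientAt_iff_hasFDerivAt]
  refine h.congr_fderiv ?_
  simp [gradient, map_sum]

theorem gradient_globalObjective_sub_eq {N K : ℕ} (hK : K ≠ 0) {f : Fin N → E → ℝ} {x : E}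
    (hf : ∀ i, DifferentiableAt ℝ (f i) x) (v : Fin N → ℕ → E) :
    gradient (globalObjective N f) x - ((N : ℝ) * K)⁻¹ • ∑ i, ∑ k ∈ range K, v i k
      = -(((N : ℝ) * K)⁻¹ • ∑ i, ∑ k ∈ range K, (v i k - gradient (f i) x)) := by
  have hK' : (K : ℝ) ≠ 0 := Nat.cast_ne_zero.2 hK
  simp only [sum_sub_distrib, sum_const, card_range, ← Nat.cast_smul_eq_nsmul ℝ, ← smul_sum,
    smul_sub, smul_smul, gradient_globalObjective hf]
  rw [mul_inv, mul_assoc, inv_mul_cancel₀ hK', mul_one]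
  abel

theorem memLp_gradient_globalObjective_comp {N : ℕ} {f : Fin N → E → ℝ}
    (hf : ∀ i, Differentiable ℝ (f i)) {X : Ω → E}
    (hX : ∀ i, MemLp (fun ω => gradient (f i) (X ω)) 2 μ) :
    MemLp (fun ω => gradient (globalObjective N f) (X ω)) 2 μ := by
  simp_rw [gradient_globalObjective fun i => hf i _]
  exact (memLp_finsetSum univ fun i _ => hX i).const_smul (N : ℝ)⁻¹

theorem integral_norm_gradient_globalObjective_sub_sq_le {N K : ℕ} (hN : N ≠ 0) (hK : K ≠ 0)
    {f : Fin N → E → ℝ} (hf : ∀ i, Differentiable ℝ (f i)) {X : Ω → E}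
    {g : Fin N → ℕ → Ω → E}
    (hmem : ∀ i, MemLp (fun ω => ∑ k ∈ range K, (g i k ω - gradient (f i) (X ω))) 2 μ) {B : ℝ}
    (hB : ∀ i, ∫ ω, ‖∑ k ∈ range K, (g i k ω - gradient (f i) (X ω))‖ ^ 2 ∂μ ≤ B) :
    ∫ ω, ‖gradient (globalObjective N f) (X ω)
        - ((N : ℝ) * K)⁻¹ • ∑ i, ∑ k ∈ range K, g i k ω‖ ^ 2 ∂μ ≤ B / K ^ 2 := by
  have hc : 0 ≤ ((N : ℝ) * K)⁻¹ := by positivity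
  have hsum := integral_norm_sum_sq_le (μ := μ) univ fun i _ => hmem i
  rw [card_univ, Fintype.card_fin] at hsum
  calc _ = ((N : ℝ) * K)⁻¹ ^ 2
        * ∫ ω, ‖∑ i, ∑ k ∈ range K, (g i k ω - gradient (f i) (X ω))‖ ^ 2 ∂μ := by
        rw [← integral_const_mul]
        refine integral_congr_ae (.of_forall fun ω => ?_)
        dsimp only
        rw [gradient_globalObjective_sub_eq hK fun i => hf i _, norm_neg, norm_smul,
          mul_pow, Real.norm_of_nonneg hc]
    _ ≤ ((N : ℝ) * K)⁻¹ ^ 2 * (N * ∑ _i : Fin N, B) := by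
        gcongr
        exact hsum.trans (by gcongr with i; exact hB i)
    _ = B / K ^ 2 := by
        rw [sum_const, card_univ, Fintype.card_fin, nsmul_eq_mul]
        field_simp

end FederatedAveraging

theorem client_deviation_bound_div_sq_le {K L η σl σg G : ℝ} (hK : 0 < K) (hG : 0 ≤ G)
    (h_lb : 1 / 256 ≤ (K * L * η) ^ 2) (h_ub : (K * L * η) ^ 2 ≤ 1 / 64) :
    (2 * K * σl ^ 2 + 5 * L ^ 2 * K ^ 3 * η ^ 2 * (σl ^ 2 + 2 * K * (2 * σg ^ 2 + 2 * G))) / K ^ 2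
      ≤ 15 / 16 * G + 60 * L ^ 2 * (9 * σl ^ 2 + K * σg ^ 2) * K * η ^ 2 := by
  rw [div_le_iff₀ (by positivity)]
  nlinarith [mul_le_mul_of_nonneg_right h_lb (by positivity : (0 : ℝ) ≤ K * σl ^ 2),
    mul_le_mul_of_nonneg_right h_ub (by positivity : (0 : ℝ) ≤ K ^ 2 * G),
    (by positivity : (0 : ℝ) ≤ L ^ 2 * K ^ 4 * η ^ 2 * σg ^ 2),
    (by positivity : (0 : ℝ) ≤ L ^ 2 * K ^ 3 * η ^ 2 * σl ^ 2)]

theorem bounded_divergence_of_global_update_general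
    {dd N K : ℕ} (hN : 0 < N) (hK : 0 < K)
    {Ω : Type*} [m : MeasurableSpace Ω] (μ : Measure Ω) [IsProbabilityMeasure μ]
    (f : Fin N → EuclideanSpace ℝ (Fin dd) → ℝ) (L σl σg ηl : ℝ) (hL : 0 < L)
    (hdiff : ∀ i, Differentiable ℝ (f i))
    (hsmooth : ∀ i x y, ‖gradient (f i) x - gradient (f i) y‖ ≤ L * ‖x - y‖)
    (hA2 : ∀ i x, ‖gradient (f i) x - gradient (globalObjective N f) x‖ ^ 2 ≤ σg ^ 2)
    (hηl_lb : 1 / (16 * K * L) ≤ ηl) (hηl_ub : ηl ≤ 1 / (8 * K * L))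
    (x0 : Ω → EuclideanSpace ℝ (Fin dd))
    (xloc : Fin N → ℕ → Ω → EuclideanSpace ℝ (Fin dd))
    (g : Fin N → ℕ → Ω → EuclideanSpace ℝ (Fin dd))
    (𝓕 : ℕ → MeasurableSpace Ω) (h𝓕_le : ∀ k, 𝓕 k ≤ m) (h𝓕_mono : Monotone 𝓕)
    (hxloc_meas : ∀ i k, StronglyMeasurable[𝓕 k] (xloc i k))
    (hxloc_L2 : ∀ i k, MemLp (xloc i k) 2 μ)
    (hg_L2 : ∀ i k, MemLp (g i k) 2 μ)
    (hinit : ∀ i, xloc i 0 = x0)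
    (hupdate : ∀ i k ω, xloc i (k + 1) ω = xloc i k ω - ηl • g i k ω)
    (hA1_unbiased : ∀ i k, μ[g i k|𝓕 k] =ᵐ[μ] fun ω => gradient (f i) (xloc i k ω))
    (hA1_var : ∀ i k, ∫ ω, ‖g i k ω - gradient (f i) (xloc i k ω)‖ ^ 2 ∂μ ≤ σl ^ 2) :
    ∫ ω, ‖gradient (globalObjective N f) (x0 ω)
        - ((N : ℝ) * K)⁻¹ • ∑ i, ∑ k ∈ Finset.range K, g i k ω‖ ^ 2 ∂μ ≤
      (15 / 16) * ∫ ω, ‖gradient (globalObjective N f) (x0 ω)‖ ^ 2 ∂μ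
        + 60 * L ^ 2 * (9 * σl ^ 2 + K * σg ^ 2) * K * ηl ^ 2 := by
  have hK' : (0 : ℝ) < K := Nat.cast_pos.2 hK
  obtain ⟨hKLη_lb, hKLη_ub⟩ := sq_mul_mul_mem_Icc hK' hL hηl_lb hηl_ub
  have hη : ηl ≠ 0 := by rintro rfl; norm_num at hKLη_lb
  have hclient : ∀ i, IsLocalSGD μ ⟨𝓕, h𝓕_mono, h𝓕_le⟩ (f i) ηl σl (xloc i) (g i) :=
    fun i => ⟨hxloc_meas i, hxloc_L2 i, hg_L2 i, hupdate i, hA1_unbiased i, hA1_var i⟩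
  have hgrad_mem : ∀ i, MemLp (fun ω => gradient (f i) (x0 ω)) 2 μ := fun i => by
    simpa only [hinit] using (hclient i).memLp_gradient (hsmooth i) 0
  refine (integral_norm_gradient_globalObjective_sub_sq_le hN.ne' hK.ne' hdiff
    (fun i => memLp_finsetSum _ fun k _ => (hg_L2 i k).sub (hgrad_mem i)) fun i => ?_).trans
    (client_deviation_bound_div_sq_le hK' (integral_nonneg fun ω => by positivity) hKLη_lb hKLη_ub)
  have h := (hclient i).integral_norm_sum_sub_gradient_init_sq_le hη (hsmooth i) hKLη_ub
  simp only [hinit] at h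
  refine h.trans ?_
  gcongr
  exact integral_norm_sq_le_of_norm_sub_sq_le (hA2 i <| x0 ·)
    (memLp_gradient_globalObjective_comp hdiff hgrad_mem)

/-- **Bounded divergence of the normalized global update (Lemma 3).**
Consider one round of Algorithm 1 option (i) under Assumptions 1 and 2 with each `f_i`
`L`-smooth and `1/(16KL) ≤ η_l ≤ 1/(8KL)`.  With the normalized global update
`d̃ = (1/(NK)) ∑_{i=1}^N ∑_{k=1}^{K} g_i^{k−1}`, the divergence from the true global gradient
is bounded as `E‖∇f(x⁰) − d̃‖² ≤ (15/16) E‖∇f(x⁰)‖² + 60L²(9σ_l² + Kσ_g²)Kη_l²`. -/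
theorem bounded_divergence_of_global_update
    {dd N K : ℕ} (hN : 0 < N) (hK : 0 < K)
    {Ω : Type*} [m : MeasurableSpace Ω] (μ : Measure Ω) [IsProbabilityMeasure μ]
    (f : Fin N → EuclideanSpace ℝ (Fin dd) → ℝ) (L σl σg ηl : ℝ) (hL : 0 < L)
    (hdiff : ∀ i, Differentiable ℝ (f i))
    (hsmooth : ∀ i x y, ‖gradient (f i) x - gradient (f i) y‖ ≤ L * ‖x - y‖)
    (hA2 : ∀ i x, ‖gradient (f i) x - gradient (globalObjective N f) x‖ ^ 2 ≤ σg ^ 2)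
    (hηl_lb : 1 / (16 * K * L) ≤ ηl) (hηl_ub : ηl ≤ 1 / (8 * K * L))
    (x0 : Ω → EuclideanSpace ℝ (Fin dd))
    (xloc : Fin N → ℕ → Ω → EuclideanSpace ℝ (Fin dd))
    (g : Fin N → ℕ → Ω → EuclideanSpace ℝ (Fin dd))
    (𝓕 : ℕ → MeasurableSpace Ω) (h𝓕_le : ∀ k, 𝓕 k ≤ m) (h𝓕_mono : Monotone 𝓕)
    (hx0_meas : StronglyMeasurable[𝓕 0] x0) (hx0_L2 : MemLp x0 2 μ)
    (hxloc_meas : ∀ i k, StronglyMeasurable[𝓕 k] (xloc i k))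
    (hxloc_L2 : ∀ i k, MemLp (xloc i k) 2 μ)
    (hg_L2 : ∀ i k, MemLp (g i k) 2 μ)
    (hinit : ∀ i, xloc i 0 = x0)
    (hupdate : ∀ i k ω, xloc i (k + 1) ω = xloc i k ω - ηl • g i k ω)
    (hA1_unbiased : ∀ i k, μ[g i k|𝓕 k] =ᵐ[μ] fun ω => gradient (f i) (xloc i k ω))
    (hA1_var : ∀ i k, ∫ ω, ‖g i k ω - gradient (f i) (xloc i k ω)‖ ^ 2 ∂μ ≤ σl ^ 2) :
    ∫ ω, ‖gradient (globalObjective N f) (x0 ω)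
        - ((N : ℝ) * K)⁻¹ • ∑ i, ∑ k ∈ Finset.range K, g i k ω‖ ^ 2 ∂μ ≤
      (15 / 16) * ∫ ω, ‖gradient (globalObjective N f) (x0 ω)‖ ^ 2 ∂μ
        + 60 * L ^ 2 * (9 * σl ^ 2 + K * σg ^ 2) * K * ηl ^ 2 :=
  bounded_divergence_of_global_update_general hN hK (m := m) μ f L σl σg ηl hL hdiff hsmooth hA2
    hηl_lb hηl_ub x0 xloc g 𝓕 h𝓕_le h𝓕_mono hxloc_meas hxloc_L2 hg_L2 hinit hupdate hA1_unbiased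
    hA1_var
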